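/- Let P be a totally ordered set and V a pointwise finite dimensional persistence module indexed by P. Assume P has a maximal element z and V_z ≠ 0. Let B be a basis of V_z compatible with the flag of images of V at z, and let v ∈ B. Then there exists an internal direct sum decomposition V = U ⊕ W such that: (1) U is an interval module; (2) {v} is a basis of U_z; (3) B − {v} is a basis of W_z. -/

import Mathlib

universe u v w w'

/-- A persistence module indexed by a poset `P`, over a field `k`. -/
structure PersMod (k : Type u) [Field k] (P : Type v) [PartialOrder P] :
    Type (max u v (w + 1)) where
  space : P → Type w
  [acg : ∀ x, AddCommGroup (space x)]
  [mod : ∀ x, Module k (space x)]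
  map : ∀ {x y : P}, x ≤ y → (space x →ₗ[k] space y)
  map_id : ∀ x : P, map (le_refl x) = LinearMap.id
  map_comp : ∀ {x y z : P} (hxy : x ≤ y) (hyz : y ≤ z),
    (map hyz).comp (map hxy) = map (hxy.trans hyz)

attribute [instance] PersMod.acg PersMod.mod

variable (k : Type u) [Field k] {P : Type v} [PartialOrder P]

/-- A morphism of persistence modules (a natural transformation). -/
structure PersHom (V : PersMod.{u, v, w} k P) (W : PersMod.{u, v, w'} k P) where
  app : ∀ x : P, V.space x →ₗ[k] W.space x
  natural : ∀ {x y : P} (h : x ≤ y) (v : V.space x),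
    app y (V.map h v) = W.map h (app x v)

/-- An isomorphism of persistence modules. -/
structure PersIso (V : PersMod.{u, v, w} k P) (W : PersMod.{u, v, w'} k P) where
  app : ∀ x : P, V.space x ≃ₗ[k] W.space x
  natural : ∀ {x y : P} (h : x ≤ y) (v : V.space x),
    app y (V.map h v) = W.map h (app x v)

/-- A subset `I` of a poset is convex if `x ≤ y ≤ z`, `x ∈ I`, `z ∈ I` imply `y ∈ I`. -/
def IsConvexIn (I : Set P) : Prop :=
  ∀ ⦃x y z : P⦄, x ∈ I → z ∈ I → x ≤ y → y ≤ z → y ∈ I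

/-- A subset `I` of a poset is connected if any two points of `I` are joined by a
zigzag path inside `I`. -/
def IsConnectedIn (I : Set P) : Prop :=
  ∀ x ∈ I, ∀ z ∈ I, ∃ (n : ℕ) (c : ℕ → P), (∀ i ≤ n, c i ∈ I) ∧ c 0 = x ∧ c n = z ∧
    ∀ i < n, c i ≤ c (i + 1) ∨ c (i + 1) ≤ c i

/-- An interval in a poset: nonempty, convex and connected. -/
def IsPosetInterval (I : Set P) : Prop :=
  I.Nonempty ∧ IsConvexIn I ∧ IsConnectedIn I

open Classical in
/-- The subspace of `k` used as the value of the constant module at `x`. -/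
noncomputable def constSub (I : Set P) (x : P) : Submodule k k :=
  if x ∈ I then ⊤ else ⊥

open Classical in
/-- The structure map of the constant module. -/
noncomputable def constMap (I : Set P) (x y : P) :
    constSub k I x →ₗ[k] constSub k I y :=
  LinearMap.codRestrict (constSub k I y)
    ((if y ∈ I then (LinearMap.id : k →ₗ[k] k) else 0).comp (constSub k I x).subtype)
    (fun c => by
      by_cases hy : y ∈ I
      · simp [constSub, hy]
      · rw [if_neg hy]
        exact Submodule.zero_mem _)

open Classical in
/-- The constant (interval) module `M(I)` attached to a convex subset `I`. -/
noncomputable def constMod (I : Set P) (hI : IsConvexIn I) : PersMod.{u, v, u} k P where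
  space x := constSub k I x
  map {x y} _ := constMap k I x y
  map_id := fun x => by
    ext c
    by_cases hx : x ∈ I
    · simp [constMap, hx]
    · have hc : (c : k) = 0 := by
        have e : constSub k I x = ⊥ := if_neg hx
        have h2 : (c : k) ∈ (⊥ : Submodule k k) := e.le c.2
        exact (Submodule.mem_bot k).mp h2
      simp [constMap, hx, hc]
  map_comp := fun {x y z} hxy hyz => by
    ext c
    by_cases hz : z ∈ I
    · by_cases hy : y ∈ I
      · simp [constMap, hy, hz]
      · have hx : x ∉ I := fun hx => hy (hI hx hz hxy hyz)
        have hc : (c : k) = 0 := by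
          have e : constSub k I x = ⊥ := if_neg hx
          have h2 : (c : k) ∈ (⊥ : Submodule k k) := e.le c.2
          exact (Submodule.mem_bot k).mp h2
        simp [constMap, hy, hz, hc]
    · simp [constMap, hz]

/-- A submodule of a persistence module: a family of subspaces preserved by the
structure maps. -/
structure PersSubmod (V : PersMod.{u, v, w} k P) where
  carrier : ∀ x : P, Submodule k (V.space x)
  mapLe : ∀ {x y : P} (h : x ≤ y), ∀ v ∈ carrier x, V.map h v ∈ carrier y

/-- A submodule of a persistence module, viewed as a persistence module in its own
right. -/
def PersSubmod.toPersMod {V : PersMod.{u, v, w} k P} (U : PersSubmod k V) :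
    PersMod.{u, v, w} k P where
  space x := U.carrier x
  map {x y} h := (V.map h).restrict (U.mapLe h)
  map_id := fun x => by
    ext c
    simp [LinearMap.restrict_apply, V.map_id]
  map_comp := fun {x y z} hxy hyz => by
    ext c
    have := LinearMap.congr_fun (V.map_comp hxy hyz) (c : V.space x)
    simpa [LinearMap.restrict_apply] using this

/-- A persistence module is an interval module if it is isomorphic to a constant
module `M(I)` for some interval `I`. -/
def IsIntervalModule (V : PersMod.{u, v, w} k P) : Prop :=
  ∃ (I : Set P) (hI : IsPosetInterval I), Nonempty (PersIso k V (constMod k I hI.2.1))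

/-- `A` is an internal direct sum decomposition of `V`:
at each point the subspaces are independent and span everything. -/
def IsDecomp (V : PersMod.{u, v, w} k P) (A : Set (PersSubmod k V)) : Prop :=
  ∀ x : P, iSupIndep (fun U : A => (U : PersSubmod k V).carrier x) ∧
    ⨆ U : A, (U : PersSubmod k V).carrier x = ⊤

/-- An interval decomposition of `V`. -/
def IsIntervalDecomp (V : PersMod.{u, v, w} k P) (A : Set (PersSubmod k V)) : Prop :=
  IsDecomp k V A ∧ ∀ U ∈ A, IsIntervalModule k U.toPersMod

/-- `V` has an interval decomposition. -/
def HasIntervalDecomp (V : PersMod.{u, v, w} k P) : Prop :=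
  ∃ A : Set (PersSubmod k V), IsIntervalDecomp k V A

/-!
Let `I` be the set of `x` with `v ∈ im V_{x,z}`, an upper set containing `z`. By finite
dimensionality the images `im V_{a,x}` with `a ∈ I` stabilise, and the stable images are mapped onto
each other (Mittag-Leffler). A Zorn argument on compatible families over upper subsets of `I` then
lifts `v` to a compatible family `u_x ∈ V_x`, that is, a morphism `s : M(I) → V` with `s_z 1 = v`.
Let `f` be the coordinate of `v` in the basis `B`. Compatibility of `B` with the flag of images
makes `f ∘ V_{x,z}` vanish for `x ∉ I`, so `g = f ∘ V_{·,z}` is a morphism `V → M(I)`, and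
`g ∘ s = id`. Hence `V = im s ⊕ ker g` with `im s ≅ M(I)`, `im s_z = ⟨v⟩` and
`ker g_z = ker f = span (B - {v})`.
-/

variable {k}

theorem exists_linearMap_eq_one_ker_eq_span_diff {R M : Type*} [CommRing R] [AddCommGroup M]
    [Module R M] {B : Set M} (hBind : LinearIndependent R ((↑) : B → M))
    (hBspan : Submodule.span R B = ⊤) {v : M} (hv : v ∈ B) :
    ∃ f : M →ₗ[R] R, f v = 1 ∧ LinearMap.ker f = Submodule.span R (B \ {v}) := by
  let b := Module.Basis.mk hBind (by rw [Subtype.range_coe, hBspan])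
  refine ⟨b.coord ⟨v, hv⟩, Module.Basis.mk_coord_apply_eq _, ?_⟩
  have hB : B \ {v} = b '' {⟨v, hv⟩}ᶜ := by
    ext t
    simp [b, Module.Basis.coe_mk, and_comm]
  ext t
  rw [LinearMap.mem_ker, hB, Module.Basis.mem_span_image, Set.subset_compl_singleton_iff,
    Finset.mem_coe, Finsupp.mem_support_iff, not_not, Module.Basis.coord_apply]

theorem IsUpperSet.isConvexIn {I : Set P} (hI : IsUpperSet I) : IsConvexIn I :=
  fun _ _ _ hx _ hxy _ => hI hxy hx

theorem isConnectedIn_of_forall_le {I : Set P} {z : P} (hzI : z ∈ I) (hz : ∀ x ∈ I, x ≤ z) :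
    IsConnectedIn I := by
  intro x hx y hy
  refine ⟨2, fun i => if i = 0 then x else if i = 1 then z else y, ?_, rfl, rfl, ?_⟩
  · intro i hi
    interval_cases i <;> simpa
  · intro i hi
    interval_cases i
    · exact .inl (by simpa using hz x hx)
    · exact .inr (by simpa using hz y hy)

theorem IsUpperSet.isPosetInterval {I : Set P} (hI : IsUpperSet I) {z : P}
    (hz : ∀ x, x ≤ z) (hzI : z ∈ I) : IsPosetInterval I :=
  ⟨⟨z, hzI⟩, hI.isConvexIn, isConnectedIn_of_forall_le hzI fun x _ => hz x⟩

theorem LinearMap.isCompl_range_ker_of_leftInverse {R M N : Type*} [Ring R] [AddCommGroup M]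
    [Module R M] [AddCommGroup N] [Module R N] {f : M →ₗ[R] N} {g : N →ₗ[R] M}
    (h : Function.LeftInverse g f) : IsCompl (LinearMap.range f) (LinearMap.ker g) := by
  have hproj : ∀ n : LinearMap.range f, (f.rangeRestrict ∘ₗ g) n = n := by
    rintro ⟨_, m, rfl⟩
    exact Subtype.ext (by simp [h m])
  have hker : LinearMap.ker (f.rangeRestrict ∘ₗ g) = LinearMap.ker g :=
    LinearMap.ker_comp_of_ker_eq_bot _
      (by rw [LinearMap.ker_rangeRestrict, LinearMap.ker_eq_bot]; exact h.injective)
  simpa only [hker] using LinearMap.isCompl_of_proj hproj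

theorem constSub_of_mem {X : Type*} {I : Set X} {x : X} (hx : x ∈ I) : constSub k I x = ⊤ :=
  if_pos hx

theorem coe_constSub_eq_zero_of_notMem {X : Type*} {I : Set X} {x : X} (hx : x ∉ I)
    (c : constSub k I x) : (c : k) = 0 :=
  (Submodule.mem_bot k).1 ((if_neg hx : constSub k I x = ⊥) ▸ c.2)

open Classical in
theorem coe_constMap {X : Type*} {I : Set X} {x y : X} (c : constSub k I x) :
    (constMap k I x y c : k) = if y ∈ I then (c : k) else 0 := by
  by_cases hy : y ∈ I <;> simp [constMap, hy]

namespace PersHom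

variable {M : PersMod.{u, v, w'} k P} {V : PersMod.{u, v, w} k P}

def range (s : PersHom k M V) : PersSubmod k V where
  carrier x := LinearMap.range (s.app x)
  mapLe h _ := by
    rintro ⟨m, rfl⟩
    exact ⟨M.map h m, s.natural h m⟩

def ker (g : PersHom k V M) : PersSubmod k V where
  carrier x := LinearMap.ker (g.app x)
  mapLe h w hw := by
    rw [LinearMap.mem_ker] at hw ⊢
    rw [g.natural, hw, map_zero]

noncomputable def rangeIso (s : PersHom k M V) (hs : ∀ x, Function.Injective (s.app x)) :
    PersIso k s.range.toPersMod M where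
  app x := (LinearEquiv.ofInjective (s.app x) (hs x)).symm
  natural {x y} h := by
    rintro ⟨w, hw⟩
    apply hs y
    change s.app y ((LinearEquiv.ofInjective (s.app y) (hs y)).symm ⟨V.map h w, _⟩) = _
    rw [LinearEquiv.ofInjective_symm_apply, s.natural]
    exact congrArg (V.map h)
      (LinearEquiv.ofInjective_symm_apply (f := s.app x) (h := hs x) ⟨w, hw⟩).symm

theorem isIntervalModule_range {I : Set P} (hI : IsPosetInterval I)
    (s : PersHom k (constMod k I hI.2.1) V) (hs : ∀ x, Function.Injective (s.app x)) :
    IsIntervalModule k s.range.toPersMod :=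
  ⟨I, hI, ⟨s.rangeIso hs⟩⟩

noncomputable def ofConstMod {S : Set P} (hS : IsUpperSet S) (u : ∀ x, V.space x)
    (hu : ∀ ⦃x y : P⦄ (h : x ≤ y), x ∈ S → V.map h (u x) = u y) :
    PersHom k (constMod k S hS.isConvexIn) V where
  app x := LinearMap.toSpanSingleton k _ (u x) ∘ₗ (constSub k S x).subtype
  natural {x y} h := by
    rintro ⟨c, hc⟩
    change (constMap k S x y ⟨c, hc⟩ : k) • u y = V.map h (c • u x)
    by_cases hx : x ∈ S
    · rw [coe_constMap, if_pos (hS h hx), map_smul, hu h hx]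
    · obtain rfl : c = 0 := coe_constSub_eq_zero_of_notMem hx ⟨c, hc⟩
      simp [coe_constMap]

noncomputable def toConstMod {I : Set P} (hI : IsConvexIn I) (φ : ∀ x, V.space x →ₗ[k] k)
    (hφ : ∀ ⦃x y : P⦄ (h : x ≤ y) (w : V.space x), y ∈ I → φ y (V.map h w) = φ x w)
    (hφ0 : ∀ x ∉ I, φ x = 0) : PersHom k V (constMod k I hI) where
  app x := LinearMap.codRestrict (constSub k I x) (φ x) fun w => by
    by_cases hx : x ∈ I
    · rw [constSub_of_mem hx]
      exact Submodule.mem_top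
    · rw [hφ0 x hx]
      exact zero_mem _
  natural {x y} h w := by
    apply Subtype.ext
    change φ y (V.map h w) = (constMap k I x y ⟨φ x w, _⟩ : k)
    by_cases hy : y ∈ I
    · rw [coe_constMap, if_pos hy, hφ h w hy]
    · rw [coe_constMap, if_neg hy, hφ0 y hy, LinearMap.zero_apply]

theorem range_ofConstMod_app {S : Set P} (hS : IsUpperSet S) (u : ∀ x, V.space x)
    (hu : ∀ ⦃x y : P⦄ (h : x ≤ y), x ∈ S → V.map h (u x) = u y) {x : P} (hx : x ∈ S) :
    LinearMap.range ((ofConstMod hS u hu).app x) = k ∙ u x := by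
  change LinearMap.range (LinearMap.toSpanSingleton k _ (u x) ∘ₗ (constSub k S x).subtype) = _
  rw [LinearMap.range_comp, Submodule.range_subtype, constSub_of_mem hx, Submodule.map_top,
    LinearMap.range_toSpanSingleton]

theorem ker_toConstMod_app {I : Set P} (hI : IsConvexIn I) (φ : ∀ x, V.space x →ₗ[k] k)
    (hφ : ∀ ⦃x y : P⦄ (h : x ≤ y) (w : V.space x), y ∈ I → φ y (V.map h w) = φ x w)
    (hφ0 : ∀ x ∉ I, φ x = 0) (x : P) :
    LinearMap.ker ((toConstMod hI φ hφ hφ0).app x) = LinearMap.ker (φ x) :=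
  LinearMap.ker_codRestrict _ _ _

theorem leftInverse_toConstMod_ofConstMod {S : Set P} (hS : IsUpperSet S)
    (u : ∀ x, V.space x) (hu : ∀ ⦃x y : P⦄ (h : x ≤ y), x ∈ S → V.map h (u x) = u y)
    (φ : ∀ x, V.space x →ₗ[k] k)
    (hφ : ∀ ⦃x y : P⦄ (h : x ≤ y) (w : V.space x), y ∈ S → φ y (V.map h w) = φ x w)
    (hφ0 : ∀ x ∉ S, φ x = 0) (hφu : ∀ x ∈ S, φ x (u x) = 1) (x : P) :
    Function.LeftInverse ((toConstMod hS.isConvexIn φ hφ hφ0).app x)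
      ((ofConstMod hS u hu).app x) := by
  rintro ⟨c, hc⟩
  apply Subtype.ext
  change φ x (c • u x) = c
  by_cases hx : x ∈ S
  · rw [map_smul, hφu x hx, smul_eq_mul, mul_one]
  · rw [hφ0 x hx, LinearMap.zero_apply]
    exact (coe_constSub_eq_zero_of_notMem hx ⟨c, hc⟩).symm

end PersHom

namespace PersMod

variable (V : PersMod.{u, v, w} k P)

@[simp]
theorem map_self_apply {x : P} (w : V.space x) : V.map le_rfl w = w := by
  rw [V.map_id]; rfl

theorem map_map {x y t : P} (hxy : x ≤ y) (hyt : y ≤ t) (w : V.space x) :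
    V.map hyt (V.map hxy w) = V.map (hxy.trans hyt) w :=
  LinearMap.congr_fun (V.map_comp hxy hyt) w

theorem map_range_map {x y t : P} (hxy : x ≤ y) (hyt : y ≤ t) :
    (LinearMap.range (V.map hxy)).map (V.map hyt) = LinearMap.range (V.map (hxy.trans hyt)) := by
  rw [← LinearMap.range_comp, V.map_comp]

theorem range_map_le_range_map {x y t : P} (hxy : x ≤ y) (hyt : y ≤ t) :
    LinearMap.range (V.map (hxy.trans hyt)) ≤ LinearMap.range (V.map hyt) := by
  rw [← V.map_comp hxy hyt]
  exact LinearMap.range_comp_le_range _ _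

theorem ker_map_le_ker_map {x y t : P} (hxy : x ≤ y) (hyt : y ≤ t) :
    LinearMap.ker (V.map hxy) ≤ LinearMap.ker (V.map (hxy.trans hyt)) := by
  rw [← V.map_comp hxy hyt]
  exact LinearMap.ker_le_ker_comp (V.map hxy) (V.map hyt)

def eventualRange (S : Set P) (x : P) : Submodule k (V.space x) :=
  ⨅ a ∈ S, ⨅ h : a ≤ x, LinearMap.range (V.map h)

variable {V}

theorem mem_eventualRange {S : Set P} {x : P} {w : V.space x} :
    w ∈ V.eventualRange S x ↔ ∀ a ∈ S, ∀ h : a ≤ x, w ∈ LinearMap.range (V.map h) := by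
  simp only [eventualRange, Submodule.mem_iInf]

theorem eventualRange_le_range {S : Set P} {a x : P} (ha : a ∈ S) (h : a ≤ x) :
    V.eventualRange S x ≤ LinearMap.range (V.map h) :=
  fun _ hw => mem_eventualRange.1 hw a ha h

section LinearOrder

variable {P : Type v} [LinearOrder P] {V : PersMod.{u, v, w} k P} {S : Set P}

theorem map_eventualRange_le {x y : P} (hxy : x ≤ y) :
    (V.eventualRange S x).map (V.map hxy) ≤ V.eventualRange S y := by
  rw [Submodule.map_le_iff_le_comap]
  intro w hw
  refine mem_eventualRange.2 fun b hb hby => ?_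
  rcases le_total b x with hbx | hxb
  · obtain ⟨w', rfl⟩ := eventualRange_le_range hb hbx hw
    exact ⟨w', (V.map_map hbx hxy w').symm⟩
  · exact ⟨V.map hxb w, V.map_map hxb hby w⟩

theorem exists_eventualRange_eq {a x : P} [FiniteDimensional k (V.space x)] (ha : a ∈ S)
    (hax : a ≤ x) : ∃ b ∈ S, ∃ h : b ≤ x, V.eventualRange S x = LinearMap.range (V.map h) := by
  obtain ⟨⟨b, hbx⟩, hb, hmin⟩ := exists_minimalFor_of_wellFoundedLT
    (fun c : {c // c ≤ x} => c.1 ∈ S) (fun c => LinearMap.range (V.map c.2)) ⟨⟨a, hax⟩, ha⟩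
  refine ⟨b, hb, hbx, le_antisymm (eventualRange_le_range hb hbx) ?_⟩
  refine le_iInf₂ fun c hc => le_iInf fun hcx => ?_
  rcases le_total c b with hcb | hbc
  · exact hmin (j := ⟨c, hcx⟩) hc (V.range_map_le_range_map hcb hbx)
  · exact V.range_map_le_range_map hbc hcx

/-- Mittag-Leffler: in finite dimension the eventual ranges are attained, hence mapped onto
each other. -/
theorem map_eventualRange {a x y : P} [FiniteDimensional k (V.space x)] (ha : a ∈ S)
    (hax : a ≤ x) (hxy : x ≤ y) :
    (V.eventualRange S x).map (V.map hxy) = V.eventualRange S y := by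
  refine le_antisymm (map_eventualRange_le hxy) ?_
  obtain ⟨b, hb, hbx, he⟩ := exists_eventualRange_eq (V := V) ha hax
  rw [he, map_range_map]
  exact eventualRange_le_range hb _

variable (V S)

structure PartialSection where
  dom : Set P
  val : ∀ x, V.space x
  dom_subset : dom ⊆ S
  isUpperSet_dom : IsUpperSet dom
  val_mem : ∀ x ∈ dom, val x ∈ V.eventualRange S x
  map_val : ∀ ⦃x y : P⦄ (h : x ≤ y), x ∈ dom → V.map h (val x) = val y

variable {V S}

namespace PartialSection

instance : Preorder (V.PartialSection S) where
  le s t := s.dom ⊆ t.dom ∧ ∀ x ∈ s.dom, s.val x = t.val x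
  le_refl _ := ⟨subset_rfl, fun _ _ => rfl⟩
  le_trans _ _ _ hst htr :=
    ⟨hst.1.trans htr.1, fun x hx => (hst.2 x hx).trans (htr.2 x (hst.1 hx))⟩

noncomputable def generate (hS : IsUpperSet S) {x : P} (hx : x ∈ S) {w : V.space x}
    (hw : w ∈ V.eventualRange S x) : V.PartialSection S where
  dom := Set.Ici x
  val y := if h : x ≤ y then V.map h w else 0
  dom_subset _ hy := hS hy hx
  isUpperSet_dom := isUpperSet_Ici x
  val_mem y hy := by
    rw [dif_pos (Set.mem_Ici.1 hy)]
    exact map_eventualRange_le hy (Submodule.mem_map_of_mem hw)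
  map_val y y' h hy := by
    rw [dif_pos (Set.mem_Ici.1 hy), dif_pos (le_trans hy h), V.map_map]

theorem generate_val (hS : IsUpperSet S) {x y : P} (hx : x ∈ S) {w : V.space x}
    (hw : w ∈ V.eventualRange S x) (hxy : x ≤ y) :
    (generate hS hx hw).val y = V.map hxy w :=
  dif_pos hxy

open Classical in
noncomputable def chainVal (c : Set (V.PartialSection S)) (x : P) : V.space x :=
  if h : ∃ s ∈ c, x ∈ s.dom then h.choose.val x else 0

theorem chainVal_eq {c : Set (V.PartialSection S)} (hc : IsChain (· ≤ ·) c)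
    {s : V.PartialSection S} (hs : s ∈ c) {x : P} (hx : x ∈ s.dom) : chainVal c x = s.val x := by
  have h : ∃ s ∈ c, x ∈ s.dom := ⟨s, hs, hx⟩
  rw [chainVal, dif_pos h]
  obtain ⟨ht, hxt⟩ := h.choose_spec
  rcases hc.total ht hs with hle | hle
  · exact hle.2 x hxt
  · exact (hle.2 x hx).symm

noncomputable def chainSup {c : Set (V.PartialSection S)} (hc : IsChain (· ≤ ·) c) :
    V.PartialSection S where
  dom := {x | ∃ s ∈ c, x ∈ s.dom}
  val := chainVal c
  dom_subset := by
    rintro _ ⟨s, -, hx⟩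
    exact s.dom_subset hx
  isUpperSet_dom := by
    rintro x y hxy ⟨s, hs, hx⟩
    exact ⟨s, hs, s.isUpperSet_dom hxy hx⟩
  val_mem := by
    rintro x ⟨s, hs, hx⟩
    rw [chainVal_eq hc hs hx]
    exact s.val_mem x hx
  map_val := by
    rintro x y h ⟨s, hs, hx⟩
    rw [chainVal_eq hc hs hx, chainVal_eq hc hs (s.isUpperSet_dom h hx)]
    exact s.map_val h hx

theorem bddAbove_of_isChain {c : Set (V.PartialSection S)} (hc : IsChain (· ≤ ·) c) :
    BddAbove c :=
  ⟨chainSup hc, fun s hs => ⟨fun _ hx => ⟨s, hs, hx⟩, fun _ hx => (chainVal_eq hc hs hx).symm⟩⟩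

/-- The key extension step: choose `y₀` in the domain where `ker V_{x,y₀}` is minimal; a lift of
`s y₀` from the eventual range at `x` then also lifts every `s y` with `y ≤ y₀`. -/
theorem exists_lift [∀ x, FiniteDimensional k (V.space x)] (s : V.PartialSection S) {x : P}
    (hx : x ∈ S) (hle : ∀ y ∈ s.dom, x ≤ y) :
    ∃ w ∈ V.eventualRange S x, ∀ y (h : x ≤ y), y ∈ s.dom → V.map h w = s.val y := by
  rcases s.dom.eq_empty_or_nonempty with hempty | ⟨y₁, hy₁⟩
  · exact ⟨0, zero_mem _, fun y _ hy => by simp [hempty] at hy⟩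
  obtain ⟨⟨y₀, hxy₀⟩, hy₀, hmin⟩ := exists_minimalFor_of_wellFoundedLT
    (fun y : {y // x ≤ y} => y.1 ∈ s.dom) (fun y => LinearMap.ker (V.map y.2))
    ⟨⟨y₁, hle y₁ hy₁⟩, hy₁⟩
  obtain ⟨w, hw, hwy₀⟩ : s.val y₀ ∈ (V.eventualRange S x).map (V.map hxy₀) := by
    rw [map_eventualRange hx le_rfl hxy₀]
    exact s.val_mem y₀ hy₀
  refine ⟨w, hw, fun y hxy hy => ?_⟩
  rcases le_total y₀ y with hy₀y | hyy₀
  · rw [← s.map_val hy₀y hy₀, ← hwy₀, V.map_map]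
  · obtain ⟨w', hw'⟩ := eventualRange_le_range hx hxy (s.val_mem y hy)
    have hker : LinearMap.ker (V.map hxy) = LinearMap.ker (V.map hxy₀) :=
      le_antisymm (V.ker_map_le_ker_map hxy hyy₀)
        (hmin (j := ⟨y, hxy⟩) hy (V.ker_map_le_ker_map hxy hyy₀))
    have hdiff : w - w' ∈ LinearMap.ker (V.map hxy₀) := by
      rw [LinearMap.mem_ker, map_sub, hwy₀, ← V.map_map hxy hyy₀, hw', s.map_val hyy₀ hy,
        sub_self]
    rw [← hker, LinearMap.mem_ker, map_sub, sub_eq_zero] at hdiff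
    rw [hdiff, hw']

theorem dom_eq_of_isMax [∀ x, FiniteDimensional k (V.space x)] (hS : IsUpperSet S)
    {m : V.PartialSection S} (hm : IsMax m) : m.dom = S := by
  refine m.dom_subset.antisymm fun x hx => ?_
  by_contra hxm
  have hle : ∀ y ∈ m.dom, x ≤ y := fun y hy =>
    (le_total x y).resolve_right fun hyx => hxm (m.isUpperSet_dom hyx hy)
  obtain ⟨w, hw, hlift⟩ := m.exists_lift hx hle
  have hext : m ≤ generate hS hx hw :=
    ⟨hle, fun y hy => by rw [generate_val hS hx hw (hle y hy), hlift y _ hy]⟩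
  exact hxm ((hm hext).1 le_rfl)

end PartialSection

theorem exists_section_of_mem_eventualRange [∀ x, FiniteDimensional k (V.space x)]
    (hS : IsUpperSet S) {z : P} (hz : z ∈ S) {v : V.space z} (hv : v ∈ V.eventualRange S z) :
    ∃ u : ∀ x, V.space x, u z = v ∧ ∀ ⦃x y : P⦄ (h : x ≤ y), x ∈ S → V.map h (u x) = u y := by
  obtain ⟨m, hgen, hm⟩ := zorn_le_nonempty_Ici₀ (PartialSection.generate hS hz hv)
    (fun _ _ hc _ _ => PartialSection.bddAbove_of_isChain hc) _ le_rfl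
  have hdom := PartialSection.dom_eq_of_isMax hS hm
  refine ⟨m.val, ?_, fun x y h hx => m.map_val h (by rwa [hdom])⟩
  rw [← hgen.2 z le_rfl, PartialSection.generate_val hS hz hv le_rfl, map_self_apply]

end LinearOrder

end PersMod

theorem split_interval_at_max_general (P : Type v) [LinearOrder P]
    (V : PersMod.{u, v, w} k P) (hfd : ∀ x : P, FiniteDimensional k (V.space x))
    (z : P) (hz : ∀ x : P, x ≤ z)
    (B : Set (V.space z))
    (hBind : LinearIndependent k ((↑) : B → V.space z))
    (hBspan : Submodule.span k B = ⊤)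
    (hBcompat : ∀ (x : P) (h : x ≤ z),
      Submodule.span k (B ∩ LinearMap.range (V.map h)) = LinearMap.range (V.map h))
    (v : V.space z) (hv : v ∈ B) :
    ∃ U W : PersSubmod k V,
      (∀ x : P, IsCompl (U.carrier x) (W.carrier x)) ∧
      IsIntervalModule k U.toPersMod ∧
      U.carrier z = Submodule.span k {v} ∧
      W.carrier z = Submodule.span k (B \ {v}) := by
  obtain ⟨f, hfv, hker⟩ := exists_linearMap_eq_one_ker_eq_span_diff hBind hBspan hv
  set I : Set P := {x | v ∈ LinearMap.range (V.map (hz x))}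
  have hI : IsUpperSet I := fun x y hxy ⟨w, hw⟩ => ⟨V.map hxy w, by rwa [V.map_map]⟩
  have hzI : z ∈ I := ⟨v, V.map_self_apply v⟩
  obtain ⟨u, huz, hu⟩ := V.exists_section_of_mem_eventualRange hI hzI
    (PersMod.mem_eventualRange.2 fun _ ha _ => ha)
  -- the image of `V_x` is spanned by vectors of `B`, and `v` is not among them when `x ∉ I`
  have hφ0 : ∀ x ∉ I, f ∘ₗ V.map (hz x) = 0 := fun x hx => LinearMap.range_le_ker_iff.1 <| by
    rw [← hBcompat x (hz x), hker]
    exact Submodule.span_mono fun t ⟨htB, htr⟩ =>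
      ⟨htB, fun htv => hx (by rwa [Set.mem_singleton_iff.1 htv] at htr)⟩
  have hφ : ∀ ⦃x y : P⦄ (h : x ≤ y) (w : V.space x), y ∈ I →
      (f ∘ₗ V.map (hz y)) (V.map h w) = (f ∘ₗ V.map (hz x)) w := fun x y h w _ => by
    simp only [LinearMap.comp_apply, V.map_map]
  have hgs := PersHom.leftInverse_toConstMod_ofConstMod hI u hu _ hφ hφ0
    fun x hx => by rw [LinearMap.comp_apply, hu (hz x) hx, huz, hfv]
  refine ⟨(PersHom.ofConstMod hI u hu).range, (PersHom.toConstMod _ _ hφ hφ0).ker,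
    fun x => LinearMap.isCompl_range_ker_of_leftInverse (hgs x),
    PersHom.isIntervalModule_range (hI.isPosetInterval hz hzI) _ fun x => (hgs x).injective,
    ?_, ?_⟩
  · rw [← huz]
    exact PersHom.range_ofConstMod_app hI u hu hzI
  · change LinearMap.ker (PersHom.app _ z) = _
    rw [PersHom.ker_toConstMod_app, ← hker, V.map_id]
    rfl

/-- Splitting off an interval summand at a maximal element: let `P` be totally
ordered with greatest element `z`, `V` pointwise finite dimensional with `V_z ≠ 0`,
`B` a basis of `V_z` compatible with the flag of images of `V` at `z`, and `v ∈ B`.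
Then `V = U ⊕ W` with `U` an interval module, `{v}` a basis of `U_z` and `B - {v}` a
basis of `W_z`. -/
theorem split_interval_at_max (P : Type v) [LinearOrder P]
    (V : PersMod.{u, v, w} k P) (hfd : ∀ x : P, FiniteDimensional k (V.space x))
    (z : P) (hz : ∀ x : P, x ≤ z) (hVz : ∃ v : V.space z, v ≠ 0)
    (B : Set (V.space z))
    (hBind : LinearIndependent k ((↑) : B → V.space z))
    (hBspan : Submodule.span k B = ⊤)
    (hBcompat : ∀ (x : P) (h : x ≤ z),
      Submodule.span k (B ∩ LinearMap.range (V.map h)) = LinearMap.range (V.map h))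
    (v : V.space z) (hv : v ∈ B) :
    ∃ U W : PersSubmod k V,
      (∀ x : P, IsCompl (U.carrier x) (W.carrier x)) ∧
      IsIntervalModule k U.toPersMod ∧
      U.carrier z = Submodule.span k {v} ∧
      W.carrier z = Submodule.span k (B \ {v}) :=
  split_interval_at_max_general P V hfd z hz B hBind hBspan hBcompat v hv
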